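/- arXiv:2303.09903 — 2 statements merged into one kernel-verified Lean document; each statement's English description precedes it below -/
import Mathlib

section
/- Let H be a k-uniform hypergraph on n vertices and H̄ its complement. Then the largest signless Laplacian eigenvalue of H̄ satisfies q_max(H̄) ≥ (n-2)θ − q_min(H), where θ = C(n-2,k-2)/(k-1) and q_min(H) is the smallest signless Laplacian eigenvalue of H. -/
open Finset

/-- The set of hyperedges containing both `i` and `j`. -/
def edgesBetween {n : ℕ} (E : Finset (Finset (Fin n))) (i j : Fin n) :
    Finset (Finset (Fin n)) :=
  E.filter fun e => i ∈ e ∧ j ∈ e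

/-- The degree of vertex `i`: the number of hyperedges containing `i`. -/
def hdeg {n : ℕ} (E : Finset (Finset (Fin n))) (i : Fin n) : ℕ :=
  (E.filter fun e => i ∈ e).card

/-- Two (distinct) vertices are adjacent if some hyperedge contains both. -/
def Adj {n : ℕ} (E : Finset (Finset (Fin n))) (i j : Fin n) : Prop :=
  i ≠ j ∧ ∃ e ∈ E, i ∈ e ∧ j ∈ e

/-- The neighbours of a vertex. -/
noncomputable def neighbors {n : ℕ} (E : Finset (Finset (Fin n))) (i : Fin n) :
    Finset (Fin n) :=
  @Finset.filter _ (fun j => Adj E i j) (Classical.decPred _) Finset.univ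

/-- Banerjee's adjacency matrix of a hypergraph: `A i j = ∑_{e ∋ i,j} 1/(|e|-1)`. -/
noncomputable def adjMat {n : ℕ} (E : Finset (Finset (Fin n))) :
    Matrix (Fin n) (Fin n) ℝ :=
  Matrix.of fun i j =>
    if i = j then 0 else ∑ e ∈ edgesBetween E i j, 1 / ((e.card : ℝ) - 1)

/-- The signless Laplacian matrix `Q = D + A`. -/
noncomputable def signlessLap {n : ℕ} (E : Finset (Finset (Fin n))) :
    Matrix (Fin n) (Fin n) ℝ :=
  Matrix.diagonal (fun i => (hdeg E i : ℝ)) + adjMat E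

/-- Largest eigenvalue of a real matrix. -/
noncomputable def qmax {n : ℕ} (M : Matrix (Fin n) (Fin n) ℝ) : ℝ :=
  sSup (spectrum ℝ M)

/-- Smallest eigenvalue of a real matrix. -/
noncomputable def qmin {n : ℕ} (M : Matrix (Fin n) (Fin n) ℝ) : ℝ :=
  sInf (spectrum ℝ M)

/-- A hypergraph is `k`-uniform if every hyperedge has exactly `k` vertices. -/
def IsUniform {n : ℕ} (k : ℕ) (E : Finset (Finset (Fin n))) : Prop :=
  ∀ e ∈ E, e.card = k

/-- A hypergraph is connected if any two vertices are joined by a walk. -/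
def Conn {n : ℕ} (E : Finset (Finset (Fin n))) : Prop :=
  ∀ i j : Fin n, Relation.ReflTransGen (Adj E) i j

/-!
Every `k`-subset containing a given pair `i ≠ j` (resp. a given vertex `i`) lies in exactly one
of `H` and `H̄`, so `Q(H) + Q(H̄) = (n-2)θ I + θ J`. As `J` is positive semidefinite,
`Q(H) + Q(H̄) ≥ (n-2)θ I` in the Loewner order, and evaluating the quadratic forms at an
eigenvector of `q_min(H)` gives `(n-2)θ ≤ q_min(H) + q_max(H̄)`.
-/

lemma Finset.card_filter_add_card_filter_sdiff {α : Type*} [DecidableEq α] {A E : Finset α}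
    (h : E ⊆ A) (p : α → Prop) [DecidablePred p] :
    #(E.filter p) + #((A \ E).filter p) = #(A.filter p) := by
  rw [← card_union_of_disjoint (disjoint_filter_filter disjoint_sdiff), ← filter_union,
    union_sdiff_of_subset h]

lemma Nat.choose_sub_one_mul_sub_one {n k : ℕ} (hk : 2 ≤ k) :
    (n - 1).choose (k - 1) * (k - 1) = (n - 1) * (n - 2).choose (k - 2) := by
  obtain ⟨j, rfl⟩ := Nat.exists_eq_add_of_le' hk
  match n with
  | 0 | 1 => simp
  | m + 2 => simpa using (Nat.add_one_mul_choose_eq m j).symm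

section Hypergraph

variable {n k : ℕ} {E : Finset (Finset (Fin n))}

lemma IsUniform.subset_powersetCard (hU : IsUniform k E) : E ⊆ univ.powersetCard k :=
  fun e he => mem_powersetCard.mpr ⟨subset_univ e, hU e he⟩

lemma isUniform_compl : IsUniform k (univ.powersetCard k \ E) :=
  fun _ he => (mem_powersetCard.mp (mem_sdiff.mp he).1).2

lemma hdeg_add_hdeg_compl (hU : IsUniform k E) (hk : 1 ≤ k) (i : Fin n) :
    hdeg E i + hdeg (univ.powersetCard k \ E) i = (n - 1).choose (k - 1) := by
  rw [hdeg, hdeg, card_filter_add_card_filter_sdiff hU.subset_powersetCard]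
  simpa using card_filter_powersetCard_subset {i} univ k (subset_univ _) (by simpa using hk)

lemma card_edgesBetween_add_compl (hU : IsUniform k E) (hk : 2 ≤ k) {i j : Fin n}
    (hij : i ≠ j) :
    #(edgesBetween E i j) + #(edgesBetween (univ.powersetCard k \ E) i j)
      = (n - 2).choose (k - 2) := by
  have hpair : #({i, j} : Finset (Fin n)) = 2 := card_pair hij
  rw [edgesBetween, edgesBetween, card_filter_add_card_filter_sdiff hU.subset_powersetCard]
  simpa [hpair, insert_subset_iff] using
    card_filter_powersetCard_subset {i, j} univ k (subset_univ _) (by omega)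

lemma signlessLap_apply_self (E : Finset (Finset (Fin n))) (i : Fin n) :
    signlessLap E i i = hdeg E i := by
  simp [signlessLap, adjMat]

lemma signlessLap_apply_of_ne (hU : IsUniform k E) {i j : Fin n} (hij : i ≠ j) :
    signlessLap E i j = #(edgesBetween E i j) / ((k : ℝ) - 1) := by
  rw [signlessLap, Matrix.add_apply, Matrix.diagonal_apply_ne _ hij, zero_add, adjMat,
    Matrix.of_apply, if_neg hij, sum_congr rfl fun e he => by rw [hU e (mem_filter.mp he).1],
    sum_const, nsmul_eq_mul, mul_one_div]

lemma edgesBetween_comm (E : Finset (Finset (Fin n))) (i j : Fin n) :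
    edgesBetween E i j = edgesBetween E j i :=
  filter_congr fun _ _ => and_comm

lemma signlessLap_isHermitian (E : Finset (Finset (Fin n))) : (signlessLap E).IsHermitian := by
  refine Matrix.IsHermitian.ext fun i j => ?_
  by_cases h : i = j
  · simp [h]
  · simp [signlessLap, adjMat, h, Ne.symm h, edgesBetween_comm E i j]

lemma signlessLap_add_signlessLap_compl (hU : IsUniform k E) (hk : 2 ≤ k) :
    signlessLap E + signlessLap (univ.powersetCard k \ E)
      = (((n : ℝ) - 2) * ((n - 2).choose (k - 2) / ((k : ℝ) - 1))) • 1
        + ((n - 2).choose (k - 2) / ((k : ℝ) - 1)) • Matrix.of fun _ _ => 1 := by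
  have hk1 : (k : ℝ) - 1 ≠ 0 := by
    have : (2 : ℝ) ≤ k := by exact_mod_cast hk
    linarith
  ext i j
  by_cases hij : i = j
  · subst hij
    have hn : 1 ≤ n := i.pos
    have hdeg_sum : (hdeg E i : ℝ) + hdeg (univ.powersetCard k \ E) i
        = (n - 1).choose (k - 1) := by
      exact_mod_cast hdeg_add_hdeg_compl hU (by omega) i
    have hchoose : ((n - 1).choose (k - 1) : ℝ) * ((k : ℝ) - 1)
        = ((n : ℝ) - 1) * (n - 2).choose (k - 2) := by
      have := Nat.choose_sub_one_mul_sub_one (n := n) hk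
      rw [← Nat.cast_pred (by omega : 0 < k), ← Nat.cast_pred hn]
      exact_mod_cast this
    rw [Matrix.add_apply, signlessLap_apply_self, signlessLap_apply_self, hdeg_sum]
    simp only [Matrix.add_apply, Matrix.smul_apply, Matrix.one_apply_eq, Matrix.of_apply,
      smul_eq_mul, mul_one]
    field_simp
    linarith
  · simp only [Matrix.add_apply, signlessLap_apply_of_ne hU hij,
      signlessLap_apply_of_ne isUniform_compl hij, Matrix.smul_apply, Matrix.one_apply_ne hij,
      Matrix.of_apply, smul_eq_mul, mul_zero, mul_one, zero_add, ← add_div]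
    exact_mod_cast congrArg (fun m : ℕ => (m : ℝ) / ((k : ℝ) - 1))
      (card_edgesBetween_add_compl hU hk hij)

end Hypergraph

section Spectrum

open Matrix
open scoped MatrixOrder

lemma Matrix.exists_mulVec_eq_smul_of_mem_spectrum {ι : Type*} [Fintype ι] [DecidableEq ι]
    {A : Matrix ι ι ℝ} {μ : ℝ} (hμ : μ ∈ spectrum ℝ A) : ∃ v ≠ 0, A *ᵥ v = μ • v := by
  rw [← spectrum_toLin', ← Module.End.hasEigenvalue_iff_mem_spectrum] at hμ
  obtain ⟨v, hv, hv0⟩ := hμ.exists_hasEigenvector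
  exact ⟨v, hv0, by simpa using Module.End.mem_eigenspace_iff.mp hv⟩

lemma Matrix.dotProduct_mulVec_le_of_le {ι : Type*} [Fintype ι] {A B : Matrix ι ι ℝ}
    (h : A ≤ B) (v : ι → ℝ) : v ⬝ᵥ A *ᵥ v ≤ v ⬝ᵥ B *ᵥ v := by
  have := (le_iff.mp h).dotProduct_mulVec_nonneg v
  rw [star_trivial, sub_mulVec, dotProduct_sub] at this
  linarith

lemma Matrix.posSemidef_of_const_one {ι : Type*} [Fintype ι] :
    (of fun _ _ => (1 : ℝ) : Matrix ι ι ℝ).PosSemidef := by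
  simpa [vecMulVec] using posSemidef_vecMulVec_self_star (fun _ : ι => (1 : ℝ))

variable {n : ℕ}

lemma le_qmax {A : Matrix (Fin n) (Fin n) ℝ} {x : ℝ} (hx : x ∈ spectrum ℝ A) : x ≤ qmax A :=
  le_csSup finite_real_spectrum.bddAbove hx

lemma qmin_mem_spectrum [NeZero n] {A : Matrix (Fin n) (Fin n) ℝ} (hA : A.IsHermitian) :
    qmin A ∈ spectrum ℝ A :=
  Set.Nonempty.csInf_mem ⟨_, hA.eigenvalues_mem_spectrum_real 0⟩ finite_real_spectrum

lemma le_algebraMap_qmax {A : Matrix (Fin n) (Fin n) ℝ} (hA : A.IsHermitian) :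
    A ≤ algebraMap ℝ _ (qmax A) :=
  le_algebraMap_of_spectrum_le (fun _ => le_qmax) hA.isSelfAdjoint

lemma le_qmin_add_qmax [NeZero n] {A B : Matrix (Fin n) (Fin n) ℝ} (hA : A.IsHermitian)
    (hB : B.IsHermitian) {c : ℝ} (h : algebraMap ℝ _ c ≤ A + B) : c ≤ qmin A + qmax B := by
  obtain ⟨v, hv0, hv⟩ := exists_mulVec_eq_smul_of_mem_spectrum (qmin_mem_spectrum hA)
  have hpos : 0 < v ⬝ᵥ v := by simpa using dotProduct_self_star_pos_iff.mpr hv0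
  have hAB := dotProduct_mulVec_le_of_le h v
  have hBmax := dotProduct_mulVec_le_of_le (le_algebraMap_qmax hB) v
  simp only [Algebra.algebraMap_eq_smul_one, smul_mulVec, one_mulVec, add_mulVec, hv,
    dotProduct_add, dotProduct_smul, smul_eq_mul] at hAB hBmax
  exact le_of_mul_le_mul_right (by linarith) hpos

end Spectrum

open scoped MatrixOrder in
theorem stmt_1 (n k : ℕ) (hk : 2 ≤ k) (E : Finset (Finset (Fin n)))
    (hU : IsUniform k E) :
    qmax (signlessLap (Finset.univ.powersetCard k \ E)) ≥
      ((n : ℝ) - 2) * ((((n - 2).choose (k - 2) : ℝ)) / ((k : ℝ) - 1))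
        - qmin (signlessLap E) := by
  set θ : ℝ := (n - 2).choose (k - 2) / ((k : ℝ) - 1)
  have hk' : (2 : ℝ) ≤ k := by exact_mod_cast hk
  have hθ : 0 ≤ θ := div_nonneg (Nat.cast_nonneg _) (by linarith)
  rcases n.eq_zero_or_pos with rfl | hn
  · simp only [qmax, qmin, spectrum.of_subsingleton, Real.sSup_empty, Real.sInf_empty,
      CharP.cast_eq_zero]
    nlinarith
  · have : NeZero n := ⟨hn.ne'⟩
    have hsum : algebraMap ℝ _ (((n : ℝ) - 2) * θ)
        ≤ signlessLap E + signlessLap (univ.powersetCard k \ E) := by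
      rw [signlessLap_add_signlessLap_compl hU hk, Algebra.algebraMap_eq_smul_one, Matrix.le_iff,
        add_sub_cancel_left]
      exact Matrix.posSemidef_of_const_one.smul hθ
    linarith [le_qmin_add_qmax (signlessLap_isHermitian _) (signlessLap_isHermitian _) hsum]
end

section
/- Let H be a connected k-uniform hypergraph with minimum degree d_min. Then the largest signless Laplacian eigenvalue satisfies q_max(H) ≥ (d_min + sqrt(d_min² + (8/(k-1))·T_min))/2, where T_min is the minimum over vertices i of T_i = Σ_{j∼i} d_j (the 2-degree of i). -/
open Finset

/-! With `Q` the signless Laplacian, `q = q_max(Q)` and `𝟙` the all-ones vector, `Q 𝟙` is the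
vector of doubled degrees. The eigenvalues of `Q` lie in `[0, q]` and `q ≥ 2 d_min` (Rayleigh
quotient at `𝟙`), so those of `Q - (d_min / 2) I` have absolute value at most `q - d_min / 2`, whence
`∑ᵢ (2 dᵢ - d_min / 2)² = ‖(Q - (d_min / 2) I) 𝟙‖² ≤ n (q - d_min / 2)²`. The left side is at least
`2 ∑ᵢ dᵢ² + n d_min² / 4`, and `∑ᵢ dᵢ² = 𝟙ᵀ A d ≥ ∑ᵢ Tᵢ / (k - 1) ≥ n T_min / (k - 1)` because
`A 𝟙 = d` and `A_ij ≥ 1 / (k - 1)` for `i ∼ j`. Solving the quadratic inequality for `q` gives the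
bound. -/

open Matrix

namespace Matrix.IsHermitian

variable {ι : Type*} [Fintype ι] [DecidableEq ι] {A : Matrix ι ι ℝ} (hA : A.IsHermitian)

lemma dotProduct_eq_sum_eigenvectorBasis_repr (v w : ι → ℝ) :
    v ⬝ᵥ w = ∑ j, hA.eigenvectorBasis.repr (WithLp.toLp 2 v) j *
      hA.eigenvectorBasis.repr (WithLp.toLp 2 w) j := by
  have := hA.eigenvectorBasis.repr.inner_map_map (WithLp.toLp 2 v) (WithLp.toLp 2 w)
  simp only [PiLp.inner_apply, RCLike.inner_apply, conj_trivial] at this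
  rw [dotProduct_comm, dotProduct, ← this]
  exact sum_congr rfl fun j _ => mul_comm _ _

lemma eigenvectorBasis_repr_mulVec (x : ι → ℝ) (j : ι) :
    hA.eigenvectorBasis.repr (WithLp.toLp 2 (A *ᵥ x)) j =
      hA.eigenvalues j * hA.eigenvectorBasis.repr (WithLp.toLp 2 x) j := by
  have hAt : Aᵀ = A := by simpa [conjTranspose_eq_transpose_of_trivial] using hA.eq
  simp only [OrthonormalBasis.repr_apply_apply, EuclideanSpace.inner_eq_star_dotProduct,
    star_trivial]
  rw [dotProduct_comm, dotProduct_mulVec, ← mulVec_transpose, hAt, mulVec_eigenvectorBasis,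
    smul_dotProduct, dotProduct_comm, smul_eq_mul]

lemma dotProduct_mulVec_le {c : ℝ} (h : ∀ j, hA.eigenvalues j ≤ c) (x : ι → ℝ) :
    x ⬝ᵥ (A *ᵥ x) ≤ c * (x ⬝ᵥ x) := by
  set y := hA.eigenvectorBasis.repr (WithLp.toLp 2 x)
  simp only [hA.dotProduct_eq_sum_eigenvectorBasis_repr x, eigenvectorBasis_repr_mulVec, mul_sum]
  refine sum_le_sum fun j _ => ?_
  nlinarith [mul_le_mul_of_nonneg_right (h j) (mul_self_nonneg (y j))]

lemma dotProduct_self_mulVec_sub_smul_le {s c : ℝ} (h : ∀ j, |hA.eigenvalues j - s| ≤ c)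
    (x : ι → ℝ) :
    (A *ᵥ x - s • x) ⬝ᵥ (A *ᵥ x - s • x) ≤ c ^ 2 * (x ⬝ᵥ x) := by
  set y := hA.eigenvectorBasis.repr (WithLp.toLp 2 x)
  simp only [hA.dotProduct_eq_sum_eigenvectorBasis_repr, WithLp.toLp_sub, WithLp.toLp_smul,
    map_sub, map_smul, PiLp.sub_apply, PiLp.smul_apply, eigenvectorBasis_repr_mulVec, mul_sum,
    smul_eq_mul]
  refine sum_le_sum fun j _ => ?_
  have := sq_le_sq' (abs_le.mp (h j)).1 (abs_le.mp (h j)).2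
  nlinarith [mul_le_mul_of_nonneg_right this (mul_self_nonneg (y j))]

lemma sum_sum_le_card_mul {q : ℝ} (hq : ∀ j, hA.eigenvalues j ≤ q) :
    ∑ i, ∑ j, A i j ≤ Fintype.card ι * q := by
  simpa [dotProduct, mulVec, mul_comm] using hA.dotProduct_mulVec_le hq (fun _ => 1)

end Matrix.IsHermitian

lemma Matrix.IsHermitian.eigenvalues_le_qmax {n : ℕ} {A : Matrix (Fin n) (Fin n) ℝ}
    (hA : A.IsHermitian) (j : Fin n) : hA.eigenvalues j ≤ qmax A :=
  le_csSup finite_real_spectrum.bddAbove (hA.eigenvalues_mem_spectrum_real j)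

namespace Matrix.PosSemidef

variable {ι : Type*} [Fintype ι] [DecidableEq ι] {A : Matrix ι ι ℝ}

lemma sum_sq_sum_sub_le (hA : A.PosSemidef) {q s : ℝ} (hq : ∀ j, hA.isHermitian.eigenvalues j ≤ q)
    (hs : 2 * s ≤ q) :
    ∑ i, (∑ j, A i j - s) ^ 2 ≤ Fintype.card ι * (q - s) ^ 2 := by
  have habs : ∀ j, |hA.isHermitian.eigenvalues j - s| ≤ q - s := fun j =>
    abs_le.mpr ⟨by linarith [hA.eigenvalues_nonneg j], by linarith [hq j]⟩
  simpa [dotProduct, mulVec, sq, mul_comm] using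
    hA.isHermitian.dotProduct_self_mulVec_sub_smul_le habs (fun _ => 1)

end Matrix.PosSemidef

lemma Matrix.posSemidef_diagonal_sum_add {ι : Type*} [Fintype ι] [DecidableEq ι]
    {A : Matrix ι ι ℝ} (hA : A.IsHermitian) (h0 : ∀ i j, 0 ≤ A i j) :
    (diagonal (fun i => ∑ j, A i j) + A).PosSemidef := by
  refine .of_dotProduct_mulVec_nonneg ((isHermitian_diagonal _).add hA) fun x => ?_
  have hquad : star x ⬝ᵥ ((diagonal (fun i => ∑ j, A i j) + A) *ᵥ x) =
      ∑ i, ∑ j, A i j * (x i ^ 2 + x i * x j) := by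
    simp only [star_trivial, dotProduct, mulVec, add_apply, diagonal_apply, ite_mul, zero_mul,
      add_mul, sum_add_distrib, sum_ite_eq, mem_univ, if_true, mul_add, mul_sum, sum_mul]
    congr 1 <;> exact sum_congr rfl fun i _ => sum_congr rfl fun j _ => by ring
  have hswap : ∑ i, ∑ j, A i j * x j ^ 2 = ∑ i, ∑ j, A i j * x i ^ 2 := by
    rw [sum_comm]
    exact sum_congr rfl fun i _ => sum_congr rfl fun j _ => by rw [← hA.apply i j, star_trivial]
  have hsq : 2 * ∑ i, ∑ j, A i j * (x i ^ 2 + x i * x j) =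
      ∑ i, ∑ j, A i j * (x i + x j) ^ 2 := by
    have hexp : ∀ i j, A i j * (x i + x j) ^ 2 =
        A i j * x i ^ 2 + A i j * x j ^ 2 + 2 * (A i j * (x i * x j)) := fun i j => by ring
    simp only [hexp, mul_add, sum_add_distrib, ← mul_sum, hswap]
    ring
  have : 0 ≤ ∑ i, ∑ j, A i j * (x i + x j) ^ 2 :=
    sum_nonneg fun i _ => sum_nonneg fun j _ => mul_nonneg (h0 i j) (sq_nonneg _)
  linarith

noncomputable def twoDeg {n : ℕ} (E : Finset (Finset (Fin n))) (i : Fin n) : ℝ :=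
  ∑ j ∈ neighbors E i, (hdeg E j : ℝ)

section Hypergraph

variable {n k : ℕ} {E : Finset (Finset (Fin n))}

lemma IsUniform.two_le_card (hU : IsUniform k E) (hk : 2 ≤ k) : ∀ e ∈ E, 2 ≤ e.card :=
  fun e he => hU e he ▸ hk

lemma mem_neighbors {i j : Fin n} : j ∈ neighbors E i ↔ Adj E i j := by
  simp [neighbors]

lemma adjMat_comm (E : Finset (Finset (Fin n))) (i j : Fin n) :
    adjMat E i j = adjMat E j i := by
  by_cases hij : i = j
  · rw [hij]
  · simp only [adjMat, Matrix.of_apply, if_neg hij, if_neg (Ne.symm hij), edgesBetween, and_comm]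

lemma adjMat_isHermitian (E : Finset (Finset (Fin n))) : (adjMat E).IsHermitian :=
  .ext fun i j => by rw [star_trivial, adjMat_comm]

lemma adjMat_apply_eq_sum_erase (E : Finset (Finset (Fin n))) (i j : Fin n) :
    adjMat E i j = ∑ e ∈ E with i ∈ e, if j ∈ e.erase i then 1 / ((e.card : ℝ) - 1) else 0 := by
  by_cases hij : i = j
  · simp [adjMat, hij]
  · have hji : j ≠ i := Ne.symm hij
    simp only [adjMat, Matrix.of_apply, if_neg hij, edgesBetween, sum_filter, mem_erase, hji,
      ne_eq, not_false_eq_true, true_and, ite_and]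

lemma adjMat_nonneg (hE : ∀ e ∈ E, 2 ≤ e.card) (i j : Fin n) : 0 ≤ adjMat E i j := by
  rw [adjMat_apply_eq_sum_erase]
  refine sum_nonneg fun e he => ?_
  have : (2 : ℝ) ≤ e.card := by exact_mod_cast hE e (mem_filter.mp he).1
  split_ifs
  · exact div_nonneg zero_le_one (by linarith)
  · exact le_rfl

lemma inv_sub_one_le_adjMat (hU : IsUniform k E) (hk : 2 ≤ k) {i j : Fin n}
    (hij : Adj E i j) : ((k : ℝ) - 1)⁻¹ ≤ adjMat E i j := by
  obtain ⟨hne, e, he, hie, hje⟩ := hij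
  have hk' : (2 : ℝ) ≤ k := by exact_mod_cast hk
  have hterm : ∀ e ∈ edgesBetween E i j, 1 / ((e.card : ℝ) - 1) = ((k : ℝ) - 1)⁻¹ :=
    fun e he => by rw [hU e (mem_filter.mp he).1, one_div]
  simp only [adjMat, Matrix.of_apply, if_neg hne, sum_congr rfl hterm]
  exact single_le_sum (f := fun _ => ((k : ℝ) - 1)⁻¹) (fun _ _ => inv_nonneg.mpr (by linarith))
    (show e ∈ edgesBetween E i j from mem_filter.mpr ⟨he, hie, hje⟩)

lemma sum_adjMat_row (hE : ∀ e ∈ E, 2 ≤ e.card) (i : Fin n) :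
    ∑ j, adjMat E i j = hdeg E i := by
  simp only [adjMat_apply_eq_sum_erase]
  rw [sum_comm, hdeg, card_eq_sum_ones, Nat.cast_sum]
  refine sum_congr rfl fun e he => ?_
  obtain ⟨heE, hie⟩ := mem_filter.mp he
  have hcard : (2 : ℝ) ≤ e.card := by exact_mod_cast hE e heE
  rw [sum_ite_mem, univ_inter, sum_const, card_erase_of_mem hie, nsmul_eq_mul,
    Nat.cast_pred (card_pos.mpr ⟨i, hie⟩), Nat.cast_one, mul_one_div_cancel (by linarith)]

lemma signlessLap_eq (hE : ∀ e ∈ E, 2 ≤ e.card) :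
    signlessLap E = Matrix.diagonal (fun i => ∑ j, adjMat E i j) + adjMat E := by
  simp only [signlessLap, sum_adjMat_row hE]

lemma signlessLap_posSemidef (hE : ∀ e ∈ E, 2 ≤ e.card) : (signlessLap E).PosSemidef := by
  rw [signlessLap_eq hE]
  exact Matrix.posSemidef_diagonal_sum_add (adjMat_isHermitian E) (adjMat_nonneg hE)

lemma sum_signlessLap_row (hE : ∀ e ∈ E, 2 ≤ e.card) (i : Fin n) :
    ∑ j, signlessLap E i j = 2 * hdeg E i := by
  simp only [signlessLap_eq hE, Matrix.add_apply, sum_add_distrib, Matrix.diagonal_apply,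
    sum_ite_eq, mem_univ, if_true, sum_adjMat_row hE]
  ring

lemma twoDeg_div_le_sum_adjMat_mul_hdeg (hU : IsUniform k E) (hk : 2 ≤ k) (i : Fin n) :
    twoDeg E i / ((k : ℝ) - 1) ≤ ∑ j, adjMat E i j * hdeg E j := by
  rw [twoDeg, sum_div]
  calc ∑ j ∈ neighbors E i, (hdeg E j : ℝ) / ((k : ℝ) - 1)
      ≤ ∑ j ∈ neighbors E i, adjMat E i j * hdeg E j := sum_le_sum fun j hj => by
        rw [div_eq_inv_mul]
        exact mul_le_mul_of_nonneg_right (inv_sub_one_le_adjMat hU hk (mem_neighbors.mp hj))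
          (Nat.cast_nonneg _)
    _ ≤ ∑ j, adjMat E i j * hdeg E j :=
        sum_le_sum_of_subset_of_nonneg (subset_univ _) fun j _ _ =>
          mul_nonneg (adjMat_nonneg (hU.two_le_card hk) i j) (Nat.cast_nonneg _)

lemma sum_twoDeg_div_le_sum_hdeg_sq (hU : IsUniform k E) (hk : 2 ≤ k) :
    (∑ i, twoDeg E i) / ((k : ℝ) - 1) ≤ ∑ i, (hdeg E i : ℝ) ^ 2 := by
  calc (∑ i, twoDeg E i) / ((k : ℝ) - 1)
      ≤ ∑ i, ∑ j, adjMat E i j * hdeg E j := by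
        rw [sum_div]
        exact sum_le_sum fun i _ => twoDeg_div_le_sum_adjMat_mul_hdeg hU hk i
    _ = ∑ j, (∑ i, adjMat E j i) * hdeg E j := by
        rw [sum_comm]
        simp only [sum_mul, adjMat_comm E _]
    _ = ∑ j, (hdeg E j : ℝ) ^ 2 := by
        simp only [sum_adjMat_row (hU.two_le_card hk), sq]

lemma card_mul_le_sum_sq_two_mul_hdeg_sub (hU : IsUniform k E) (hk : 2 ≤ k) {d T : ℝ}
    (hd : ∀ i, d ≤ hdeg E i) (hT : ∀ i, T ≤ twoDeg E i) :
    n * (2 * T / (k - 1) + d ^ 2 / 4) ≤ ∑ i, (2 * (hdeg E i : ℝ) - d / 2) ^ 2 := by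
  have hk' : (0 : ℝ) ≤ k - 1 := by linarith [show (2 : ℝ) ≤ k by exact_mod_cast hk]
  have hsumT : n * T ≤ ∑ i, twoDeg E i := by
    simpa using sum_le_sum fun i (_ : i ∈ univ) => hT i
  calc n * (2 * T / (k - 1) + d ^ 2 / 4)
      = 2 * (n * T / (k - 1)) + n * (d ^ 2 / 4) := by ring
    _ ≤ 2 * ((∑ i, twoDeg E i) / (k - 1)) + n * (d ^ 2 / 4) := by
        gcongr
    _ ≤ 2 * ∑ i, (hdeg E i : ℝ) ^ 2 + n * (d ^ 2 / 4) := by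
        linarith [sum_twoDeg_div_le_sum_hdeg_sq hU hk]
    _ = ∑ i, (2 * (hdeg E i : ℝ) ^ 2 + d ^ 2 / 4) := by
        simp [sum_add_distrib, mul_sum]
    _ ≤ ∑ i, (2 * (hdeg E i : ℝ) - d / 2) ^ 2 :=
        sum_le_sum fun i _ => by nlinarith [hd i]

lemma two_mul_le_qmax_signlessLap (hn : 0 < n) (hE : ∀ e ∈ E, 2 ≤ e.card) {d : ℝ}
    (hd : ∀ i, d ≤ hdeg E i) : 2 * d ≤ qmax (signlessLap E) := by
  have hQ := (signlessLap_posSemidef hE).isHermitian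
  have h := hQ.sum_sum_le_card_mul hQ.eigenvalues_le_qmax
  have : ∑ _i : Fin n, 2 * d ≤ ∑ i, 2 * (hdeg E i : ℝ) := sum_le_sum fun i _ => by linarith [hd i]
  simp only [sum_signlessLap_row hE, Fintype.card_fin] at h
  simp only [sum_const, card_univ, Fintype.card_fin, nsmul_eq_mul] at this
  exact le_of_mul_le_mul_left (this.trans h) (by exact_mod_cast hn)

end Hypergraph

theorem stmt_3_general (n k : ℕ) (hn : 0 < n) (hk : 2 ≤ k) (E : Finset (Finset (Fin n)))
    (hU : IsUniform k E) :
    qmax (signlessLap E) ≥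
      ((⨅ i : Fin n, (hdeg E i : ℝ)) +
        Real.sqrt ((⨅ i : Fin n, (hdeg E i : ℝ)) ^ 2 +
          8 / ((k : ℝ) - 1) *
            (⨅ i : Fin n, ∑ j ∈ neighbors E i, (hdeg E j : ℝ)))) / 2 := by
  have : Nonempty (Fin n) := Fin.pos_iff_nonempty.mp hn
  have hE := hU.two_le_card hk
  have hQ := signlessLap_posSemidef hE
  set q := qmax (signlessLap E)
  set d := ⨅ i : Fin n, (hdeg E i : ℝ)
  set T := ⨅ i : Fin n, ∑ j ∈ neighbors E i, (hdeg E j : ℝ)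
  have hd : ∀ i, d ≤ hdeg E i := ciInf_le (Set.finite_range _).bddBelow
  have hT : ∀ i, T ≤ twoDeg E i := ciInf_le (Set.finite_range _).bddBelow
  have hd0 : 0 ≤ d := le_ciInf fun i => Nat.cast_nonneg _
  have h2d : 2 * d ≤ q := two_mul_le_qmax_signlessLap hn hE hd
  have hsq := hQ.sum_sq_sum_sub_le hQ.isHermitian.eigenvalues_le_qmax (s := d / 2) (by linarith)
  simp only [sum_signlessLap_row hE, Fintype.card_fin] at hsq
  have hTd : 2 * T / (k - 1) + d ^ 2 / 4 ≤ (q - d / 2) ^ 2 :=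
    le_of_mul_le_mul_left ((card_mul_le_sum_sq_two_mul_hdeg_sub hU hk hd hT).trans hsq)
      (by exact_mod_cast hn)
  have key : d ^ 2 + 8 / ((k : ℝ) - 1) * T ≤ (2 * q - d) ^ 2 := by
    rw [show 8 / ((k : ℝ) - 1) * T = 4 * (2 * T / (k - 1)) by ring]
    nlinarith
  rw [ge_iff_le, div_le_iff₀ two_pos, ← le_sub_iff_add_le', Real.sqrt_le_left (by linarith)]
  linarith

theorem stmt_3 (n k : ℕ) (hn : 0 < n) (hk : 2 ≤ k) (E : Finset (Finset (Fin n)))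
    (hU : IsUniform k E) (hc : Conn E) :
    qmax (signlessLap E) ≥
      ((⨅ i : Fin n, (hdeg E i : ℝ)) +
        Real.sqrt ((⨅ i : Fin n, (hdeg E i : ℝ)) ^ 2 +
          8 / ((k : ℝ) - 1) *
            (⨅ i : Fin n, ∑ j ∈ neighbors E i, (hdeg E j : ℝ)))) / 2 :=
  stmt_3_general n k hn hk E hU
end
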